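/- arXiv:2001.09515 — 5 statements merged into one kernel-verified Lean document; each statement's English description precedes it below -/
import Mathlib

section
/- The six vectors |φ_{n,j}⟩ = (1/√2) Σ_{a=0}^{1} (−1)^{na} |a⟩⊗|(j+a mod 3)'⟩ in C²⊗C⁴ (n∈{0,1}, j∈{0,1,2}) are unextendible as a maximally entangled set: every vector ψ∈C²⊗C⁴ orthogonal to all six of them is of the form v⊗|3'⟩ for some v∈C²; in particular, no unit vector orthogonal to all six |φ_{n,j}⟩ is maximally entangled (its coefficient matrix M satisfies M M† ≠ (1/2)·I₂). -/
noncomputable def phi (d : ℕ) (n : Fin 2) (m : Fin d) : EuclideanSpace ℂ (Fin 2 × Fin d) :=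
  WithLp.toLp 2 fun (p : Fin 2 × Fin d) =>
    (Real.sqrt 2 : ℂ)⁻¹ * (-1 : ℂ) ^ ((n : ℕ) * (p.1 : ℕ)) *
      (if (p.2 : ℕ) = (if (m : ℕ) = d - 1 then d - 1 else ((m : ℕ) + (p.1 : ℕ)) % (d - 1))
        then 1 else 0)

/-- The `2×4` coefficient matrix of a vector of `C² ⊗ C⁴`. -/
noncomputable def coeffMat (ψ : EuclideanSpace ℂ (Fin 2 × Fin 4)) : Matrix (Fin 2) (Fin 4) ℂ :=
  Matrix.of fun a b => ψ (a, b)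

/-- Unextendibility of the six-member maximally entangled set `|φ_{n,j}⟩`
(`n ∈ {0,1}`, `j ∈ {0,1,2}`) in `C² ⊗ C⁴`: any vector orthogonal to all six of them is of the
form `v ⊗ |3'⟩`, and in particular no unit vector orthogonal to all of them is maximally
entangled. -/
theorem six_umeb_vectors_unextendible (ψ : EuclideanSpace ℂ (Fin 2 × Fin 4))
    (horth : ∀ (n : Fin 2) (j : Fin 3), (inner ℂ (phi 4 n j.castSucc) ψ : ℂ) = 0) :
    (∃ v : Fin 2 → ℂ, ∀ (a : Fin 2) (b : Fin 4), ψ (a, b) = if b = 3 then v a else 0) ∧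
      (‖ψ‖ = 1 → coeffMat ψ * (coeffMat ψ).conjTranspose ≠ ((1 : ℂ) / 2) • 1) := by
  have h00 := horth 0 0
  have h01 := horth 0 1
  have h02 := horth 0 2
  have h10 := horth 1 0
  have h11 := horth 1 1
  have h12 := horth 1 2
  simp only [phi, PiLp.inner_apply, PiLp.toLp_apply, Fintype.sum_prod_type, Fin.sum_univ_succ, RCLike.inner_apply,
    Finset.sum_empty, Fin.sum_univ_zero] at h00 h01 h02 h10 h11 h12
  norm_num at h00 h01 h02 h10 h11 h12
  have hc : ((Real.sqrt 2 : ℂ))⁻¹ ≠ 0 := by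
    simp [Real.sqrt_eq_zero', Complex.ofReal_eq_zero]
  have key : ∀ x y : ℂ, ((Real.sqrt 2 : ℂ))⁻¹ * x + ((Real.sqrt 2 : ℂ))⁻¹ * y = 0 →
      ((Real.sqrt 2 : ℂ))⁻¹ * x + -(((Real.sqrt 2 : ℂ))⁻¹ * y) = 0 → x = 0 ∧ y = 0 := by
    intro x y h1 h2
    have hx : ((Real.sqrt 2 : ℂ))⁻¹ * x = 0 := by linear_combination (h1 + h2) / 2
    have hy : ((Real.sqrt 2 : ℂ))⁻¹ * y = 0 := by linear_combination (h1 - h2) / 2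
    exact ⟨by simpa [hc] using hx, by simpa [hc] using hy⟩
  obtain ⟨z00, z11⟩ := key (ψ (0, 0)) (ψ (1, 1)) (by linear_combination h00) (by linear_combination h10)
  obtain ⟨z01, z12⟩ := key (ψ (0, 1)) (ψ (1, 2)) (by linear_combination h01) (by linear_combination h11)
  obtain ⟨z02, z10⟩ := key (ψ (0, 2)) (ψ (1, 0)) (by linear_combination h02) (by linear_combination h12)
  have hz : ∀ a : Fin 2, ∀ b : Fin 4, b ≠ 3 → ψ (a, b) = 0 := by
    intro a b hb
    fin_cases a <;> fin_cases b <;>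
      first
      | exact z00 | exact z01 | exact z02 | exact z10 | exact z11 | exact z12
      | simp at hb
  constructor
  · refine ⟨fun a => ψ (a, 3), fun a b => ?_⟩
    by_cases hb : b = 3
    · subst hb; simp
    · simp [hb, hz a b hb]
  · intro _ heq
    have e00 := congrFun (congrFun heq 0) 0
    have e01 := congrFun (congrFun heq 0) 1
    have e11 := congrFun (congrFun heq 1) 1
    simp only [Matrix.mul_apply, Fin.sum_univ_four, coeffMat, Matrix.of_apply,
      Matrix.conjTranspose_apply, Matrix.smul_apply, Matrix.one_apply, Pi.smul_apply] at e00 e01 e11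
    have za0 := hz 0 0 (by decide)
    have za1 := hz 0 1 (by decide)
    have za2 := hz 0 2 (by decide)
    have zb0 := hz 1 0 (by decide)
    have zb1 := hz 1 1 (by decide)
    have zb2 := hz 1 2 (by decide)
    rw [za0, za1, za2] at e00 e01
    rw [zb0, zb1, zb2] at e01 e11
    norm_num at e00 e01 e11
    rcases e01 with h | h
    · rw [h] at e00; norm_num at e00
    · rw [h] at e11; norm_num at e11
end

section
/- Let S = (s_{kl}) be a 2×2 unitary matrix and W = (w_{st}) a 4×4 unitary matrix, and set |ψ_{p,q}⟩ = (S⊗W)|φ_{p,q}⟩. Then the two orthonormal bases {|φ_{n,m}⟩} and {|ψ_{p,q}⟩} of C²⊗C⁴ are mutually unbiased (i.e. |⟨φ_{n,m}|ψ_{p,q}⟩| = 1/(2√2) for all n,p∈{0,1}, m,q∈{0,1,2,3}) if and only if for every (a,b,c)∈{(0,0,0),(0,1,1),(1,0,1),(1,1,0)} and all k,j∈{1,2}: (i) |s₁₁w_{k,j}+(−1)^a s₂₁w_{k+1,j}+(−1)^b s₁₂w_{k,j+1}+(−1)^c s₂₂w_{k+1,j+1}| = 1/√2; (ii) |s₁₁w_{k,4}+(−1)^a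 s₂₁w_{k+1,4}+(−1)^b s₁₂w_{k,4}+(−1)^c s₂₂w_{k+1,4}| = 1/√2; (iii) |s₁₁w_{4,j}+(−1)^a s₂₁w_{4,j}+(−1)^b s₁₂w_{4,j+1}+(−1)^c s₂₂w_{4,j+1}| = 1/√2; (iv) |s₁₁w_{3,j}+(−1)^a s₂₁w_{1,j}+(−1)^b s₁₂w_{3,j+1}+(−1)^c s₂₂w_{1,j+1}| = 1/√2; (v) |s₁₁w_{k,3}+(−1)^a s₂₁w_{k+1,3}+(−1)^b s₁₂w_{k,1}+(−1)^c s₂₂w_{k+1,1}| = 1/√2; (vi) |s₁₁w_{3,3}+(−1)^a s₂₁w_{1,3}+(−1)^b s₁₂w_{3,1}+(−1)^c s₂₂w_{1,1}| = 1/√2; (vii) |s₁₁w_{3,4}+(−1)^a s₂₁w_{1,4}+(−1)^b s₁₂w_{3,4}+(−1)^c s₂₂w_{1,4}| = 1/√2; (viii) |s₁₁w_{4,3}+(−1)^a s₂₁w_{4,3}+(−1)^b s₁₂w_{4,1}+(−1)^c s₂₂w_{4,1}| = 1/√2; (ix) |s₁₁w_{4,4}+(−1)^a s₂₁w_{4,4}+(−1)^b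 s₁₂w_{4,4}+(−1)^c s₂₂w_{4,4}| = 1/√2. -/
open scoped Kronecker

/-- `|ψ_{n,m}⟩ = (S ⊗ W)|φ_{n,m}⟩`. -/
noncomputable def psi (d : ℕ) (S : Matrix (Fin 2) (Fin 2) ℂ) (W : Matrix (Fin d) (Fin d) ℂ)
    (n : Fin 2) (m : Fin d) : EuclideanSpace ℂ (Fin 2 × Fin d) :=
  WithLp.toLp 2 ((S ⊗ₖ W).mulVec (phi d n m))

/-- The `(s,t)` entry of a `d×d` matrix with `1`-based indices `s,t ∈ {1,…,d}`. -/
def went {d : ℕ} (hd : 0 < d) (W : Matrix (Fin d) (Fin d) ℂ) (s t : ℕ) : ℂ :=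
  W ⟨(s - 1) % d, Nat.mod_lt _ hd⟩ ⟨(t - 1) % d, Nat.mod_lt _ hd⟩

private def r : Fin 4 → Fin 2 → Fin 4
  | 0, 0 => 0 | 0, 1 => 1 | 1, 0 => 1 | 1, 1 => 2 | 2, 0 => 2 | 2, 1 => 0 | 3, _ => 3

private noncomputable def E (S : Matrix (Fin 2) (Fin 2) ℂ) (W : Matrix (Fin 4) (Fin 4) ℂ)
    (a b : ℕ) (m q : Fin 4) : ℂ :=
  S 0 0 * W (r m 0) (r q 0) + (-1)^a * S 1 0 * W (r m 1) (r q 0)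
    + (-1)^b * S 0 1 * W (r m 0) (r q 1) + (-1)^(a+b) * S 1 1 * W (r m 1) (r q 1)

private lemma v0 : ((0:Fin 4):ℕ) = 0 := rfl
private lemma v1 : ((1:Fin 4):ℕ) = 1 := rfl
private lemma v2 : ((2:Fin 4):ℕ) = 2 := rfl
private lemma v3 : ((3:Fin 4):ℕ) = 3 := rfl

set_option maxHeartbeats 2000000 in
private lemma inner_formula (S : Matrix (Fin 2) (Fin 2) ℂ) (W : Matrix (Fin 4) (Fin 4) ℂ)
    (n p : Fin 2) (m q : Fin 4) :
    (inner ℂ (phi 4 n m) (psi 4 S W p q) : ℂ)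
      = (Real.sqrt 2 : ℂ)⁻¹ * (Real.sqrt 2 : ℂ)⁻¹ * E S W n p m q := by
  fin_cases m <;> fin_cases q <;>
  · simp only [PiLp.inner_apply, Fintype.sum_prod_type, Fin.sum_univ_two, Fin.sum_univ_four,
      psi, phi, Matrix.mulVec, dotProduct, PiLp.toLp_apply, WithLp.ofLp_toLp, Matrix.kroneckerMap_apply, E, r,
      v0, v1, v2, v3]
    norm_num
    ring

private lemma key (S : Matrix (Fin 2) (Fin 2) ℂ) (W : Matrix (Fin 4) (Fin 4) ℂ)
    (n p : Fin 2) (m q : Fin 4) :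
    ‖(inner ℂ (phi 4 n m) (psi 4 S W p q) : ℂ)‖ = 1 / (2 * Real.sqrt 2) ↔
      ‖E S W ↑n ↑p m q‖ = 1 / Real.sqrt 2 := by
  have h2 : (0:ℝ) < Real.sqrt 2 := by positivity
  have hs : ‖((Real.sqrt 2 : ℝ) : ℂ)⁻¹‖ = (Real.sqrt 2)⁻¹ := by
    rw [norm_inv]
    simp [Complex.norm_real, Real.norm_eq_abs, abs_of_nonneg (Real.sqrt_nonneg 2)]
  have hss : (Real.sqrt 2)⁻¹ * (Real.sqrt 2)⁻¹ = 1/2 := by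
    rw [← mul_inv, Real.mul_self_sqrt (by norm_num : (0:ℝ) ≤ 2)]
    norm_num
  rw [inner_formula, norm_mul, norm_mul, hs, hss,
    show (1:ℝ) / (2 * Real.sqrt 2) = 1/2 * (1 / Real.sqrt 2) by ring]
  constructor <;> intro hx <;> linarith

set_option maxHeartbeats 12000000 in
/-- Necessary and sufficient condition for the two bases `{|φ_{n,m}⟩}` and
`{|ψ_{p,q}⟩ = (S⊗W)|φ_{p,q}⟩}` of `C² ⊗ C⁴` to be mutually unbiased. -/
theorem mub_iff_condition_C2xC4 (S : Matrix (Fin 2) (Fin 2) ℂ) (W : Matrix (Fin 4) (Fin 4) ℂ)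
    (hS : S ∈ Matrix.unitaryGroup (Fin 2) ℂ) (hW : W ∈ Matrix.unitaryGroup (Fin 4) ℂ) :
    (∀ (n p : Fin 2) (m q : Fin 4),
        ‖(inner ℂ (phi 4 n m) (psi 4 S W p q) : ℂ)‖ = 1 / (2 * Real.sqrt 2)) ↔
    (∀ a b c : ℕ, (a, b, c) ∈ ({(0,0,0), (0,1,1), (1,0,1), (1,1,0)} : Set (ℕ × ℕ × ℕ)) →
      ∀ k ∈ ({1, 2} : Set ℕ), ∀ j ∈ ({1, 2} : Set ℕ),
        (let w := went (by norm_num : (0:ℕ) < 4) W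
        ‖S 0 0 * w k j + (-1 : ℂ) ^ a * S 1 0 * w (k+1) j
            + (-1 : ℂ) ^ b * S 0 1 * w k (j+1) + (-1 : ℂ) ^ c * S 1 1 * w (k+1) (j+1)‖
          = 1 / Real.sqrt 2 ∧
        ‖S 0 0 * w k 4 + (-1 : ℂ) ^ a * S 1 0 * w (k+1) 4
            + (-1 : ℂ) ^ b * S 0 1 * w k 4 + (-1 : ℂ) ^ c * S 1 1 * w (k+1) 4‖
          = 1 / Real.sqrt 2 ∧
        ‖S 0 0 * w 4 j + (-1 : ℂ) ^ a * S 1 0 * w 4 j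
            + (-1 : ℂ) ^ b * S 0 1 * w 4 (j+1) + (-1 : ℂ) ^ c * S 1 1 * w 4 (j+1)‖
          = 1 / Real.sqrt 2 ∧
        ‖S 0 0 * w 3 j + (-1 : ℂ) ^ a * S 1 0 * w 1 j
            + (-1 : ℂ) ^ b * S 0 1 * w 3 (j+1) + (-1 : ℂ) ^ c * S 1 1 * w 1 (j+1)‖
          = 1 / Real.sqrt 2 ∧
        ‖S 0 0 * w k 3 + (-1 : ℂ) ^ a * S 1 0 * w (k+1) 3
            + (-1 : ℂ) ^ b * S 0 1 * w k 1 + (-1 : ℂ) ^ c * S 1 1 * w (k+1) 1‖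
          = 1 / Real.sqrt 2 ∧
        ‖S 0 0 * w 3 3 + (-1 : ℂ) ^ a * S 1 0 * w 1 3
            + (-1 : ℂ) ^ b * S 0 1 * w 3 1 + (-1 : ℂ) ^ c * S 1 1 * w 1 1‖
          = 1 / Real.sqrt 2 ∧
        ‖S 0 0 * w 3 4 + (-1 : ℂ) ^ a * S 1 0 * w 1 4
            + (-1 : ℂ) ^ b * S 0 1 * w 3 4 + (-1 : ℂ) ^ c * S 1 1 * w 1 4‖
          = 1 / Real.sqrt 2 ∧
        ‖S 0 0 * w 4 3 + (-1 : ℂ) ^ a * S 1 0 * w 4 3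
            + (-1 : ℂ) ^ b * S 0 1 * w 4 1 + (-1 : ℂ) ^ c * S 1 1 * w 4 1‖
          = 1 / Real.sqrt 2 ∧
        ‖S 0 0 * w 4 4 + (-1 : ℂ) ^ a * S 1 0 * w 4 4
            + (-1 : ℂ) ^ b * S 0 1 * w 4 4 + (-1 : ℂ) ^ c * S 1 1 * w 4 4‖
          = 1 / Real.sqrt 2)) := by
  have hP0 : (∀ (n p : Fin 2) (m q : Fin 4),
      ‖(inner ℂ (phi 4 n m) (psi 4 S W p q) : ℂ)‖ = 1 / (2 * Real.sqrt 2)) ↔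
      (∀ (n p : Fin 2) (m q : Fin 4), ‖E S W ↑n ↑p m q‖ = 1 / Real.sqrt 2) := by
    constructor <;> intro h n p m q
    · exact (key S W n p m q).mp (h n p m q)
    · exact (key S W n p m q).mpr (h n p m q)
  rw [hP0]
  constructor
  · intro hP a b c habc k hk j hj
    simp only [Set.mem_insert_iff, Set.mem_singleton_iff, Prod.mk.injEq] at habc hk hj
    obtain ⟨rfl,rfl,rfl⟩|⟨rfl,rfl,rfl⟩|⟨rfl,rfl,rfl⟩|⟨rfl,rfl,rfl⟩ := habc <;>
      obtain rfl|rfl := hk <;> obtain rfl|rfl := hj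
    · exact ⟨by simpa [E, r, went] using hP 0 0 0 0, by simpa [E, r, went] using hP 0 0 0 3, by simpa [E, r, went] using hP 0 0 3 0, by simpa [E, r, went] using hP 0 0 2 0, by simpa [E, r, went] using hP 0 0 0 2, by simpa [E, r, went] using hP 0 0 2 2, by simpa [E, r, went] using hP 0 0 2 3, by simpa [E, r, went] using hP 0 0 3 2, by simpa [E, r, went] using hP 0 0 3 3⟩
    · exact ⟨by simpa [E, r, went] using hP 0 0 0 1, by simpa [E, r, went] using hP 0 0 0 3, by simpa [E, r, went] using hP 0 0 3 1, by simpa [E, r, went] using hP 0 0 2 1, by simpa [E, r, went] using hP 0 0 0 2, by simpa [E, r, went] using hP 0 0 2 2, by simpa [E, r, went] using hP 0 0 2 3, by simpa [E, r, went] using hP 0 0 3 2, by simpa [E, r, went] using hP 0 0 3 3⟩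
    · exact ⟨by simpa [E, r, went] using hP 0 0 1 0, by simpa [E, r, went] using hP 0 0 1 3, by simpa [E, r, went] using hP 0 0 3 0, by simpa [E, r, went] using hP 0 0 2 0, by simpa [E, r, went] using hP 0 0 1 2, by simpa [E, r, went] using hP 0 0 2 2, by simpa [E, r, went] using hP 0 0 2 3, by simpa [E, r, went] using hP 0 0 3 2, by simpa [E, r, went] using hP 0 0 3 3⟩
    · exact ⟨by simpa [E, r, went] using hP 0 0 1 1, by simpa [E, r, went] using hP 0 0 1 3, by simpa [E, r, went] using hP 0 0 3 1, by simpa [E, r, went] using hP 0 0 2 1, by simpa [E, r, went] using hP 0 0 1 2, by simpa [E, r, went] using hP 0 0 2 2, by simpa [E, r, went] using hP 0 0 2 3, by simpa [E, r, went] using hP 0 0 3 2, by simpa [E, r, went] using hP 0 0 3 3⟩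
    · exact ⟨by simpa [E, r, went] using hP 0 1 0 0, by simpa [E, r, went] using hP 0 1 0 3, by simpa [E, r, went] using hP 0 1 3 0, by simpa [E, r, went] using hP 0 1 2 0, by simpa [E, r, went] using hP 0 1 0 2, by simpa [E, r, went] using hP 0 1 2 2, by simpa [E, r, went] using hP 0 1 2 3, by simpa [E, r, went] using hP 0 1 3 2, by simpa [E, r, went] using hP 0 1 3 3⟩
    · exact ⟨by simpa [E, r, went] using hP 0 1 0 1, by simpa [E, r, went] using hP 0 1 0 3, by simpa [E, r, went] using hP 0 1 3 1, by simpa [E, r, went] using hP 0 1 2 1, by simpa [E, r, went] using hP 0 1 0 2, by simpa [E, r, went] using hP 0 1 2 2, by simpa [E, r, went] using hP 0 1 2 3, by simpa [E, r, went] using hP 0 1 3 2, by simpa [E, r, went] using hP 0 1 3 3⟩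
    · exact ⟨by simpa [E, r, went] using hP 0 1 1 0, by simpa [E, r, went] using hP 0 1 1 3, by simpa [E, r, went] using hP 0 1 3 0, by simpa [E, r, went] using hP 0 1 2 0, by simpa [E, r, went] using hP 0 1 1 2, by simpa [E, r, went] using hP 0 1 2 2, by simpa [E, r, went] using hP 0 1 2 3, by simpa [E, r, went] using hP 0 1 3 2, by simpa [E, r, went] using hP 0 1 3 3⟩
    · exact ⟨by simpa [E, r, went] using hP 0 1 1 1, by simpa [E, r, went] using hP 0 1 1 3, by simpa [E, r, went] using hP 0 1 3 1, by simpa [E, r, went] using hP 0 1 2 1, by simpa [E, r, went] using hP 0 1 1 2, by simpa [E, r, went] using hP 0 1 2 2, by simpa [E, r, went] using hP 0 1 2 3, by simpa [E, r, went] using hP 0 1 3 2, by simpa [E, r, went] using hP 0 1 3 3⟩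
    · exact ⟨by simpa [E, r, went] using hP 1 0 0 0, by simpa [E, r, went] using hP 1 0 0 3, by simpa [E, r, went] using hP 1 0 3 0, by simpa [E, r, went] using hP 1 0 2 0, by simpa [E, r, went] using hP 1 0 0 2, by simpa [E, r, went] using hP 1 0 2 2, by simpa [E, r, went] using hP 1 0 2 3, by simpa [E, r, went] using hP 1 0 3 2, by simpa [E, r, went] using hP 1 0 3 3⟩
    · exact ⟨by simpa [E, r, went] using hP 1 0 0 1, by simpa [E, r, went] using hP 1 0 0 3, by simpa [E, r, went] using hP 1 0 3 1, by simpa [E, r, went] using hP 1 0 2 1, by simpa [E, r, went] using hP 1 0 0 2, by simpa [E, r, went] using hP 1 0 2 2, by simpa [E, r, went] using hP 1 0 2 3, by simpa [E, r, went] using hP 1 0 3 2, by simpa [E, r, went] using hP 1 0 3 3⟩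
    · exact ⟨by simpa [E, r, went] using hP 1 0 1 0, by simpa [E, r, went] using hP 1 0 1 3, by simpa [E, r, went] using hP 1 0 3 0, by simpa [E, r, went] using hP 1 0 2 0, by simpa [E, r, went] using hP 1 0 1 2, by simpa [E, r, went] using hP 1 0 2 2, by simpa [E, r, went] using hP 1 0 2 3, by simpa [E, r, went] using hP 1 0 3 2, by simpa [E, r, went] using hP 1 0 3 3⟩
    · exact ⟨by simpa [E, r, went] using hP 1 0 1 1, by simpa [E, r, went] using hP 1 0 1 3, by simpa [E, r, went] using hP 1 0 3 1, by simpa [E, r, went] using hP 1 0 2 1, by simpa [E, r, went] using hP 1 0 1 2, by simpa [E, r, went] using hP 1 0 2 2, by simpa [E, r, went] using hP 1 0 2 3, by simpa [E, r, went] using hP 1 0 3 2, by simpa [E, r, went] using hP 1 0 3 3⟩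
    · exact ⟨by simpa [E, r, went] using hP 1 1 0 0, by simpa [E, r, went] using hP 1 1 0 3, by simpa [E, r, went] using hP 1 1 3 0, by simpa [E, r, went] using hP 1 1 2 0, by simpa [E, r, went] using hP 1 1 0 2, by simpa [E, r, went] using hP 1 1 2 2, by simpa [E, r, went] using hP 1 1 2 3, by simpa [E, r, went] using hP 1 1 3 2, by simpa [E, r, went] using hP 1 1 3 3⟩
    · exact ⟨by simpa [E, r, went] using hP 1 1 0 1, by simpa [E, r, went] using hP 1 1 0 3, by simpa [E, r, went] using hP 1 1 3 1, by simpa [E, r, went] using hP 1 1 2 1, by simpa [E, r, went] using hP 1 1 0 2, by simpa [E, r, went] using hP 1 1 2 2, by simpa [E, r, went] using hP 1 1 2 3, by simpa [E, r, went] using hP 1 1 3 2, by simpa [E, r, went] using hP 1 1 3 3⟩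
    · exact ⟨by simpa [E, r, went] using hP 1 1 1 0, by simpa [E, r, went] using hP 1 1 1 3, by simpa [E, r, went] using hP 1 1 3 0, by simpa [E, r, went] using hP 1 1 2 0, by simpa [E, r, went] using hP 1 1 1 2, by simpa [E, r, went] using hP 1 1 2 2, by simpa [E, r, went] using hP 1 1 2 3, by simpa [E, r, went] using hP 1 1 3 2, by simpa [E, r, went] using hP 1 1 3 3⟩
    · exact ⟨by simpa [E, r, went] using hP 1 1 1 1, by simpa [E, r, went] using hP 1 1 1 3, by simpa [E, r, went] using hP 1 1 3 1, by simpa [E, r, went] using hP 1 1 2 1, by simpa [E, r, went] using hP 1 1 1 2, by simpa [E, r, went] using hP 1 1 2 2, by simpa [E, r, went] using hP 1 1 2 3, by simpa [E, r, went] using hP 1 1 3 2, by simpa [E, r, went] using hP 1 1 3 3⟩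
  · intro hR n p m q
    fin_cases n <;> fin_cases p <;> fin_cases m <;> fin_cases q
    · simpa [E, r, went] using (hR 0 0 0 (by norm_num) 1 (by norm_num) 1 (by norm_num)).1
    · simpa [E, r, went] using (hR 0 0 0 (by norm_num) 1 (by norm_num) 2 (by norm_num)).1
    · simpa [E, r, went] using (hR 0 0 0 (by norm_num) 1 (by norm_num) 1 (by norm_num)).2.2.2.2.1
    · simpa [E, r, went] using (hR 0 0 0 (by norm_num) 1 (by norm_num) 1 (by norm_num)).2.1
    · simpa [E, r, went] using (hR 0 0 0 (by norm_num) 2 (by norm_num) 1 (by norm_num)).1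
    · simpa [E, r, went] using (hR 0 0 0 (by norm_num) 2 (by norm_num) 2 (by norm_num)).1
    · simpa [E, r, went] using (hR 0 0 0 (by norm_num) 2 (by norm_num) 1 (by norm_num)).2.2.2.2.1
    · simpa [E, r, went] using (hR 0 0 0 (by norm_num) 2 (by norm_num) 1 (by norm_num)).2.1
    · simpa [E, r, went] using (hR 0 0 0 (by norm_num) 1 (by norm_num) 1 (by norm_num)).2.2.2.1
    · simpa [E, r, went] using (hR 0 0 0 (by norm_num) 1 (by norm_num) 2 (by norm_num)).2.2.2.1
    · simpa [E, r, went] using (hR 0 0 0 (by norm_num) 1 (by norm_num) 1 (by norm_num)).2.2.2.2.2.1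
    · simpa [E, r, went] using (hR 0 0 0 (by norm_num) 1 (by norm_num) 1 (by norm_num)).2.2.2.2.2.2.1
    · simpa [E, r, went] using (hR 0 0 0 (by norm_num) 1 (by norm_num) 1 (by norm_num)).2.2.1
    · simpa [E, r, went] using (hR 0 0 0 (by norm_num) 1 (by norm_num) 2 (by norm_num)).2.2.1
    · simpa [E, r, went] using (hR 0 0 0 (by norm_num) 1 (by norm_num) 1 (by norm_num)).2.2.2.2.2.2.2.1
    · simpa [E, r, went] using (hR 0 0 0 (by norm_num) 1 (by norm_num) 1 (by norm_num)).2.2.2.2.2.2.2.2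
    · simpa [E, r, went] using (hR 0 1 1 (by norm_num) 1 (by norm_num) 1 (by norm_num)).1
    · simpa [E, r, went] using (hR 0 1 1 (by norm_num) 1 (by norm_num) 2 (by norm_num)).1
    · simpa [E, r, went] using (hR 0 1 1 (by norm_num) 1 (by norm_num) 1 (by norm_num)).2.2.2.2.1
    · simpa [E, r, went] using (hR 0 1 1 (by norm_num) 1 (by norm_num) 1 (by norm_num)).2.1
    · simpa [E, r, went] using (hR 0 1 1 (by norm_num) 2 (by norm_num) 1 (by norm_num)).1
    · simpa [E, r, went] using (hR 0 1 1 (by norm_num) 2 (by norm_num) 2 (by norm_num)).1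
    · simpa [E, r, went] using (hR 0 1 1 (by norm_num) 2 (by norm_num) 1 (by norm_num)).2.2.2.2.1
    · simpa [E, r, went] using (hR 0 1 1 (by norm_num) 2 (by norm_num) 1 (by norm_num)).2.1
    · simpa [E, r, went] using (hR 0 1 1 (by norm_num) 1 (by norm_num) 1 (by norm_num)).2.2.2.1
    · simpa [E, r, went] using (hR 0 1 1 (by norm_num) 1 (by norm_num) 2 (by norm_num)).2.2.2.1
    · simpa [E, r, went] using (hR 0 1 1 (by norm_num) 1 (by norm_num) 1 (by norm_num)).2.2.2.2.2.1
    · simpa [E, r, went] using (hR 0 1 1 (by norm_num) 1 (by norm_num) 1 (by norm_num)).2.2.2.2.2.2.1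
    · simpa [E, r, went] using (hR 0 1 1 (by norm_num) 1 (by norm_num) 1 (by norm_num)).2.2.1
    · simpa [E, r, went] using (hR 0 1 1 (by norm_num) 1 (by norm_num) 2 (by norm_num)).2.2.1
    · simpa [E, r, went] using (hR 0 1 1 (by norm_num) 1 (by norm_num) 1 (by norm_num)).2.2.2.2.2.2.2.1
    · simpa [E, r, went] using (hR 0 1 1 (by norm_num) 1 (by norm_num) 1 (by norm_num)).2.2.2.2.2.2.2.2
    · simpa [E, r, went] using (hR 1 0 1 (by norm_num) 1 (by norm_num) 1 (by norm_num)).1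
    · simpa [E, r, went] using (hR 1 0 1 (by norm_num) 1 (by norm_num) 2 (by norm_num)).1
    · simpa [E, r, went] using (hR 1 0 1 (by norm_num) 1 (by norm_num) 1 (by norm_num)).2.2.2.2.1
    · simpa [E, r, went] using (hR 1 0 1 (by norm_num) 1 (by norm_num) 1 (by norm_num)).2.1
    · simpa [E, r, went] using (hR 1 0 1 (by norm_num) 2 (by norm_num) 1 (by norm_num)).1
    · simpa [E, r, went] using (hR 1 0 1 (by norm_num) 2 (by norm_num) 2 (by norm_num)).1
    · simpa [E, r, went] using (hR 1 0 1 (by norm_num) 2 (by norm_num) 1 (by norm_num)).2.2.2.2.1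
    · simpa [E, r, went] using (hR 1 0 1 (by norm_num) 2 (by norm_num) 1 (by norm_num)).2.1
    · simpa [E, r, went] using (hR 1 0 1 (by norm_num) 1 (by norm_num) 1 (by norm_num)).2.2.2.1
    · simpa [E, r, went] using (hR 1 0 1 (by norm_num) 1 (by norm_num) 2 (by norm_num)).2.2.2.1
    · simpa [E, r, went] using (hR 1 0 1 (by norm_num) 1 (by norm_num) 1 (by norm_num)).2.2.2.2.2.1
    · simpa [E, r, went] using (hR 1 0 1 (by norm_num) 1 (by norm_num) 1 (by norm_num)).2.2.2.2.2.2.1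
    · simpa [E, r, went] using (hR 1 0 1 (by norm_num) 1 (by norm_num) 1 (by norm_num)).2.2.1
    · simpa [E, r, went] using (hR 1 0 1 (by norm_num) 1 (by norm_num) 2 (by norm_num)).2.2.1
    · simpa [E, r, went] using (hR 1 0 1 (by norm_num) 1 (by norm_num) 1 (by norm_num)).2.2.2.2.2.2.2.1
    · simpa [E, r, went] using (hR 1 0 1 (by norm_num) 1 (by norm_num) 1 (by norm_num)).2.2.2.2.2.2.2.2
    · simpa [E, r, went] using (hR 1 1 0 (by norm_num) 1 (by norm_num) 1 (by norm_num)).1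
    · simpa [E, r, went] using (hR 1 1 0 (by norm_num) 1 (by norm_num) 2 (by norm_num)).1
    · simpa [E, r, went] using (hR 1 1 0 (by norm_num) 1 (by norm_num) 1 (by norm_num)).2.2.2.2.1
    · simpa [E, r, went] using (hR 1 1 0 (by norm_num) 1 (by norm_num) 1 (by norm_num)).2.1
    · simpa [E, r, went] using (hR 1 1 0 (by norm_num) 2 (by norm_num) 1 (by norm_num)).1
    · simpa [E, r, went] using (hR 1 1 0 (by norm_num) 2 (by norm_num) 2 (by norm_num)).1
    · simpa [E, r, went] using (hR 1 1 0 (by norm_num) 2 (by norm_num) 1 (by norm_num)).2.2.2.2.1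
    · simpa [E, r, went] using (hR 1 1 0 (by norm_num) 2 (by norm_num) 1 (by norm_num)).2.1
    · simpa [E, r, went] using (hR 1 1 0 (by norm_num) 1 (by norm_num) 1 (by norm_num)).2.2.2.1
    · simpa [E, r, went] using (hR 1 1 0 (by norm_num) 1 (by norm_num) 2 (by norm_num)).2.2.2.1
    · simpa [E, r, went] using (hR 1 1 0 (by norm_num) 1 (by norm_num) 1 (by norm_num)).2.2.2.2.2.1
    · simpa [E, r, went] using (hR 1 1 0 (by norm_num) 1 (by norm_num) 1 (by norm_num)).2.2.2.2.2.2.1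
    · simpa [E, r, went] using (hR 1 1 0 (by norm_num) 1 (by norm_num) 1 (by norm_num)).2.2.1
    · simpa [E, r, went] using (hR 1 1 0 (by norm_num) 1 (by norm_num) 2 (by norm_num)).2.2.1
    · simpa [E, r, went] using (hR 1 1 0 (by norm_num) 1 (by norm_num) 1 (by norm_num)).2.2.2.2.2.2.2.1
    · simpa [E, r, went] using (hR 1 1 0 (by norm_num) 1 (by norm_num) 1 (by norm_num)).2.2.2.2.2.2.2.2
end

section
/- Let S = diag(e^{iφ₁}, e^{iφ₂}) be a diagonal 2×2 unitary matrix and W = (w_{st}) a 4×4 unitary matrix. If the two bases {|φ_{n,m}⟩} and {(S⊗W)|φ_{p,q}⟩} of C²⊗C⁴ are mutually unbiased (|⟨φ_{n,m}|(S⊗W)|φ_{p,q}⟩| = 1/(2√2) for all n,p∈{0,1}, m,q∈{0,1,2,3}), then |w_{st}| = 1/2 for all s,t∈{1,2,3,4}. -/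
open scoped Kronecker

set_option maxHeartbeats 2000000

/-- The cyclic permutation of `{0,1,2}` fixing `3`. -/
def sig : Fin 4 → Fin 4 := ![1, 2, 0, 3]

/-- The inner product `⟨φ_{n,m}, (S ⊗ W) φ_{0,q}⟩` for `S = diag(e1, e2)` equals
`(e1 * W m q + (-1)^n * e2 * W (σ m) (σ q)) / 2`. -/
theorem inner_eq (e1 e2 : ℂ) (W : Matrix (Fin 4) (Fin 4) ℂ) (n : Fin 2) (m q : Fin 4) :
    (inner ℂ (phi 4 n m) (psi 4 (Matrix.diagonal ![e1, e2]) W 0 q) : ℂ) =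
      (2:ℂ)⁻¹ * (e1 * W m q + (-1:ℂ)^(n:ℕ) * e2 * W (sig m) (sig q)) := by
  have hc : ((Real.sqrt 2 : ℝ) : ℂ)⁻¹ ^ 2 = (2:ℂ)⁻¹ := by
    rw [sq, ← mul_inv, ← Complex.ofReal_mul, Real.mul_self_sqrt (by norm_num)]; norm_num
  fin_cases m <;> fin_cases q <;>
    simp [phi, psi, sig, PiLp.inner_apply, Matrix.mulVec, dotProduct,
      Matrix.kroneckerMap_apply, Fintype.sum_prod_type, Fin.sum_univ_two, Fin.sum_univ_four,
      Matrix.diagonal_apply, show ((2:Fin 4):ℕ) = 2 from rfl, show ((3:Fin 4):ℕ) = 3 from rfl]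
  all_goals (ring_nf; rw [hc]; ring)

/-- If `S = diag(e^{iφ₁}, e^{iφ₂})` is diagonal unitary, `W` is unitary and the bases
`{|φ_{n,m}⟩}` and `{(S⊗W)|φ_{p,q}⟩}` of `C² ⊗ C⁴` are mutually unbiased, then every entry of
`W` has modulus `1/2`. -/
theorem mub_implies_flat_W (φ₁ φ₂ : ℝ) (W : Matrix (Fin 4) (Fin 4) ℂ)
    (hW : W ∈ Matrix.unitaryGroup (Fin 4) ℂ)
    (hmub : ∀ (n p : Fin 2) (m q : Fin 4),
      ‖(inner ℂ (phi 4 n m)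
          (psi 4 (Matrix.diagonal ![Complex.exp (φ₁ * Complex.I),
            Complex.exp (φ₂ * Complex.I)]) W p q) : ℂ)‖ = 1 / (2 * Real.sqrt 2)) :
    ∀ s t : Fin 4, ‖W s t‖ = 1 / 2 := by
  have hs2 : (0:ℝ) < Real.sqrt 2 := Real.sqrt_pos.mpr (by norm_num)
  have hmm : Real.sqrt 2 * Real.sqrt 2 = 2 := Real.mul_self_sqrt (by norm_num)
  have key : ∀ m q : Fin 4, ‖W m q‖ ^ 2 + ‖W (sig m) (sig q)‖ ^ 2 = 1 / 2 := by
    intro m q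
    have h0 := hmub 0 0 m q
    have h1 := hmub 1 0 m q
    rw [inner_eq] at h0 h1
    set u := Complex.exp (φ₁ * Complex.I) * W m q with hu
    set v := Complex.exp (φ₂ * Complex.I) * W (sig m) (sig q) with hv
    have h0' : ‖u + v‖ ^ 2 = 1 / 2 := by
      have e : (2:ℂ)⁻¹ * (Complex.exp (φ₁ * Complex.I) * W m q +
          (-1:ℂ)^((0 : Fin 2):ℕ) * Complex.exp (φ₂ * Complex.I) * W (sig m) (sig q)) =
          (2:ℂ)⁻¹ * (u + v) := by rw [hu, hv]; norm_num
      rw [e, norm_mul] at h0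
      have h2 : ‖(2:ℂ)⁻¹‖ = 1/2 := by norm_num
      rw [h2] at h0
      have : ‖u + v‖ = (Real.sqrt 2)⁻¹ := by
        field_simp at h0 ⊢; linarith
      rw [this, sq, ← mul_inv, hmm]; norm_num
    have h1' : ‖u - v‖ ^ 2 = 1 / 2 := by
      have e : (2:ℂ)⁻¹ * (Complex.exp (φ₁ * Complex.I) * W m q +
          (-1:ℂ)^((1 : Fin 2):ℕ) * Complex.exp (φ₂ * Complex.I) * W (sig m) (sig q)) =
          (2:ℂ)⁻¹ * (u - v) := by rw [hu, hv]; norm_num; ring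
      rw [e, norm_mul] at h1
      have h2 : ‖(2:ℂ)⁻¹‖ = 1/2 := by norm_num
      rw [h2] at h1
      have : ‖u - v‖ = (Real.sqrt 2)⁻¹ := by
        field_simp at h1 ⊢; linarith
      rw [this, sq, ← mul_inv, hmm]; norm_num
    have hpar := parallelogram_law_with_norm ℂ u v
    have hnu : ‖u‖ = ‖W m q‖ := by
      rw [hu, norm_mul, Complex.norm_exp_ofReal_mul_I, one_mul]
    have hnv : ‖v‖ = ‖W (sig m) (sig q)‖ := by
      rw [hv, norm_mul, Complex.norm_exp_ofReal_mul_I, one_mul]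
    rw [hnu, hnv] at hpar
    simp only [pow_two] at h0' h1' ⊢
    linarith
  intro s t
  have k1 := key s t
  have k2 := key (sig s) (sig t)
  have k3 := key (sig (sig s)) (sig (sig t))
  have hs : sig (sig (sig s)) = s := by fin_cases s <;> rfl
  have ht : sig (sig (sig t)) = t := by fin_cases t <;> rfl
  rw [hs, ht] at k3
  have h2 : ‖W s t‖ ^ 2 = 1 / 4 := by linarith
  nlinarith [h2, norm_nonneg (W s t)]
end

section
/- Let ω_k = e^{kπi/6}, let S = diag(ω₄, ω₁) and let W = (1/2)·[[1,−1,1,1],[1,1,−1,1],[−1,1,1,1],[1,1,1,−1]]. Then S and W are unitary, and the basis {(S⊗W)|φ_{p,q}⟩: p∈{0,1}, q∈{0,1,2,3}} of C²⊗C⁴ is mutually unbiased with the basis {|φ_{n,m}⟩}: |⟨φ_{n,m}|(S⊗W)|φ_{p,q}⟩| = 1/(2√2) for all n,p∈{0,1}, m,q∈{0,1,2,3}. -/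
open scoped Kronecker

/-- The twelfth roots of unity `ω_k = e^{kπi/6}`. -/
noncomputable def ω (k : ℕ) : ℂ := Complex.exp ((k : ℂ) * Real.pi * Complex.I / 6)

noncomputable def S₂ : Matrix (Fin 2) (Fin 2) ℂ := Matrix.diagonal ![ω 4, ω 1]

noncomputable def W₂ : Matrix (Fin 4) (Fin 4) ℂ :=
  (1 / 2 : ℂ) • !![1, -1,  1, 1;
                   1,  1, -1, 1;
                  -1,  1,  1, 1;
                   1,  1,  1, -1]

lemma omega_eq (k : ℕ) : ω k = Complex.exp ((((k:ℝ) * Real.pi / 6 : ℝ) : ℂ) * Complex.I) := by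
  unfold ω; push_cast; ring_nf

lemma re1 : (ω 1).re = Real.sqrt 3 / 2 := by
  rw [omega_eq, Complex.exp_ofReal_mul_I_re]; norm_num [Real.cos_pi_div_six]
lemma im1 : (ω 1).im = 1 / 2 := by
  rw [omega_eq, Complex.exp_ofReal_mul_I_im]; norm_num [Real.sin_pi_div_six]
lemma re4 : (ω 4).re = -(1/2) := by
  rw [omega_eq, Complex.exp_ofReal_mul_I_re]; push_cast
  rw [show ((4:ℝ) * Real.pi / 6) = Real.pi - Real.pi/3 by ring]
  rw [Real.cos_pi_sub, Real.cos_pi_div_three]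
lemma im4 : (ω 4).im = Real.sqrt 3 / 2 := by
  rw [omega_eq, Complex.exp_ofReal_mul_I_im]; push_cast
  rw [show ((4:ℝ) * Real.pi / 6) = Real.pi - Real.pi/3 by ring]
  rw [Real.sin_pi_sub, Real.sin_pi_div_three]

lemma h8' : (Real.sqrt 2)⁻¹ * (1/2) = Real.sqrt (1/8) := by
  have h2 : Real.sqrt 2 ^ 2 = 2 := Real.sq_sqrt (by norm_num)
  have h2p : (0:ℝ) < Real.sqrt 2 := Real.sqrt_pos.mpr (by norm_num)
  rw [show (1/8 : ℝ) = ((Real.sqrt 2)⁻¹ * (1/2))^2 by field_simp; nlinarith]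
  rw [Real.sqrt_sq (by positivity)]

lemma conj_omega_mul (k : ℕ) : (starRingEnd ℂ) (ω k) * ω k = 1 := by
  unfold ω
  rw [← Complex.exp_conj, ← Complex.exp_add]
  rw [show (starRingEnd ℂ) ((k:ℂ) * Real.pi * Complex.I / 6) = -((k:ℂ) * Real.pi * Complex.I / 6)
    by simp [map_div₀, map_ofNat]; ring]
  simp

lemma omega_mul_conj (k : ℕ) : ω k * (starRingEnd ℂ) (ω k) = 1 := by
  rw [mul_comm]; exact conj_omega_mul k

set_option maxHeartbeats 0 in
/-- Example 2: `S = diag(ω₄, ω₁)` and the given `W` are unitary, and the bases `{|φ_{n,m}⟩}`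
and `{(S⊗W)|φ_{p,q}⟩}` of `C²⊗C⁴` are mutually unbiased. -/
theorem example2_mub :
    S₂ ∈ Matrix.unitaryGroup (Fin 2) ℂ ∧ W₂ ∈ Matrix.unitaryGroup (Fin 4) ℂ ∧
    ∀ (n p : Fin 2) (m q : Fin 4),
      ‖(inner ℂ (phi 4 n m) (psi 4 S₂ W₂ p q) : ℂ)‖ = 1 / (2 * Real.sqrt 2) := by
  refine ⟨⟨?_, ?_⟩, ⟨?_, ?_⟩, ?_⟩
  · ext i j
    fin_cases i <;> fin_cases j <;>
      simp [S₂, Matrix.mul_apply, Fin.sum_univ_succ, Matrix.diagonal, Matrix.star_apply,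
        conj_omega_mul, omega_mul_conj]
  · ext i j
    fin_cases i <;> fin_cases j <;>
      simp [S₂, Matrix.mul_apply, Fin.sum_univ_succ, Matrix.diagonal, Matrix.star_apply,
        conj_omega_mul, omega_mul_conj]
  · ext i j
    fin_cases i <;> fin_cases j <;>
      norm_num [W₂, Matrix.mul_apply, Fin.sum_univ_succ, Matrix.star_apply, Matrix.one_apply, map_ofNat, Fin.ext_iff]
  · ext i j
    fin_cases i <;> fin_cases j <;>
      norm_num [W₂, Matrix.mul_apply, Fin.sum_univ_succ, Matrix.star_apply, Matrix.one_apply, map_ofNat, Fin.ext_iff]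
  · intro n p m q
    have h2 : Real.sqrt 2 ^ 2 = 2 := Real.sq_sqrt (by norm_num)
    have h3 : Real.sqrt 3 ^ 2 = 3 := Real.sq_sqrt (by norm_num)
    rw [show (1 : ℝ) / (2 * Real.sqrt 2) = (Real.sqrt 2)⁻¹ * (1/2) by ring]
    fin_cases n <;> fin_cases p <;> fin_cases m <;> fin_cases q <;>
      (simp only [PiLp.inner_apply, RCLike.inner_apply, psi, Matrix.mulVec, dotProduct,
         phi, S₂, W₂, Fintype.sum_prod_type, Fin.sum_univ_succ, Fin.sum_univ_zero]
       norm_num [Matrix.kroneckerMap_apply, Matrix.diagonal, Complex.norm_def,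
         Complex.normSq_apply, re1, im1, re4, im4, Matrix.cons_val_zero, Matrix.cons_val_one,
         Matrix.head_cons, Matrix.tail_cons, Matrix.cons_val_two, Matrix.cons_val_three,
         Matrix.vecHead, Matrix.vecTail]
       rw [h8']
       congr 1
       linear_combination (Real.sqrt 2 ^ 2 * Real.sqrt 2 ^ 2 / 128) * h3 +
         ((Real.sqrt 2 ^ 2 + 2) / 32) * h2)
end

section
/- Let ω_k = e^{kπi/6}, let S = diag(ω₂, ω₁₁) and let W = (1/2)·[[1,1,1,1],[1,1,−1,−1],[1,−1,1,−1],[1,−1,−1,1]]. Then S and W are unitary, and the basis {(S⊗W)|φ_{p,q}⟩: p∈{0,1}, q∈{0,1,2,3}} of C²⊗C⁴ is mutually unbiased with the basis {|φ_{n,m}⟩}: |⟨φ_{n,m}|(S⊗W)|φ_{p,q}⟩| = 1/(2√2) for all n,p∈{0,1}, m,q∈{0,1,2,3}. -/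
open scoped Kronecker

noncomputable def S₃ : Matrix (Fin 2) (Fin 2) ℂ := Matrix.diagonal ![ω 2, ω 11]

noncomputable def W₃ : Matrix (Fin 4) (Fin 4) ℂ :=
  (1 / 2 : ℂ) • !![1,  1,  1,  1;
                   1,  1, -1, -1;
                   1, -1,  1, -1;
                   1, -1, -1,  1]


lemma omega11 : ω 11 = -Complex.I * ω 2 := by
  have h : ((11:ℕ) : ℂ) * Real.pi * Complex.I / 6
      = (((-(Real.pi/2) : ℝ)) : ℂ) * Complex.I + (2 * Real.pi * Complex.I)
        + ((2:ℕ) : ℂ) * Real.pi * Complex.I / 6 := by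
    push_cast; ring
  rw [ω, ω, h, Complex.exp_add, Complex.exp_add, Complex.exp_two_pi_mul_I, mul_one,
    Complex.exp_mul_I]
  push_cast
  simp

lemma omega2_abs : ‖ω 2‖ = 1 := by
  have : ((2:ℕ) : ℂ) * Real.pi * Complex.I / 6 = ((2 * Real.pi / 6 : ℝ) : ℂ) * Complex.I := by
    push_cast; ring
  rw [ω, this, Complex.norm_exp_ofReal_mul_I]

lemma abs_sum : ‖ω 2 + ω 11‖ = Real.sqrt 2 := by
  rw [omega11, show ω 2 + -Complex.I * ω 2 = ω 2 * (1 - Complex.I) by ring, norm_mul,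
    omega2_abs, one_mul, Complex.norm_def, Complex.normSq_apply]
  norm_num

lemma abs_diff : ‖ω 2 - ω 11‖ = Real.sqrt 2 := by
  rw [omega11, show ω 2 - -Complex.I * ω 2 = ω 2 * (1 + Complex.I) by ring, norm_mul,
    omega2_abs, one_mul, Complex.norm_def, Complex.normSq_apply]
  norm_num

lemma finisher (z : ℂ)
    (h : z = ((Real.sqrt 2 : ℂ)⁻¹ * (Real.sqrt 2 : ℂ)⁻¹ * (1/2)) * (ω 2 + ω 11) ∨
         z = ((Real.sqrt 2 : ℂ)⁻¹ * (Real.sqrt 2 : ℂ)⁻¹ * (1/2)) * (ω 2 - ω 11) ∨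
         z = -(((Real.sqrt 2 : ℂ)⁻¹ * (Real.sqrt 2 : ℂ)⁻¹ * (1/2)) * (ω 2 + ω 11)) ∨
         z = -(((Real.sqrt 2 : ℂ)⁻¹ * (Real.sqrt 2 : ℂ)⁻¹ * (1/2)) * (ω 2 - ω 11))) :
    ‖z‖ = (Real.sqrt 2)⁻¹ * (1/2) := by
  have hK : ‖(Real.sqrt 2 : ℂ)⁻¹ * (Real.sqrt 2 : ℂ)⁻¹ * (1/2)‖ =
      (Real.sqrt 2)⁻¹ * (Real.sqrt 2)⁻¹ * (1/2) := by
    simp [norm_mul, norm_inv, Complex.norm_real, abs_of_nonneg (Real.sqrt_nonneg 2)]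
  have h2 : (Real.sqrt 2)⁻¹ * (Real.sqrt 2)⁻¹ * (1/2) * Real.sqrt 2
      = (Real.sqrt 2)⁻¹ * (1/2) := by
    have h0 : Real.sqrt 2 ≠ 0 := by positivity
    have hm : Real.sqrt 2 * Real.sqrt 2 = 2 := Real.mul_self_sqrt (by norm_num)
    field_simp
  rcases h with h | h | h | h <;> rw [h] <;>
    simp only [norm_neg, norm_mul, hK, abs_sum, abs_diff] <;> exact h2

set_option maxHeartbeats 0 in
/-- Example 3: `S = diag(ω₂, ω₁₁)` and the given `W` are unitary, and the bases `{|φ_{n,m}⟩}`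
and `{(S⊗W)|φ_{p,q}⟩}` of `C²⊗C⁴` are mutually unbiased. -/
theorem example3_mub :
    S₃ ∈ Matrix.unitaryGroup (Fin 2) ℂ ∧ W₃ ∈ Matrix.unitaryGroup (Fin 4) ℂ ∧
    ∀ (n p : Fin 2) (m q : Fin 4),
      ‖(inner ℂ (phi 4 n m) (psi 4 S₃ W₃ p q) : ℂ)‖ = 1 / (2 * Real.sqrt 2) := by
  refine ⟨?_, ?_, ?_⟩
  · rw [Matrix.mem_unitaryGroup_iff]
    ext i j
    fin_cases i <;> fin_cases j <;>
      simp [S₃, Matrix.mul_apply, Fin.sum_univ_two, Matrix.one_apply,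
        Matrix.conjTranspose_apply, Matrix.diagonal_apply, omega_mul_conj]
  · rw [Matrix.mem_unitaryGroup_iff]
    ext i j
    fin_cases i <;> fin_cases j <;>
      simp [W₃, Matrix.mul_apply, Fin.sum_univ_four, Matrix.one_apply,
        Matrix.conjTranspose_apply, map_ofNat] <;>
      norm_num [map_ofNat]
  · intro n p m q
    fin_cases n <;> fin_cases p <;> fin_cases m <;> fin_cases q <;>
    · simp only [PiLp.inner_apply, RCLike.inner_apply, psi, Matrix.mulVec, dotProduct, PiLp.toLp_apply, WithLp.ofLp_toLp,
        Fintype.sum_prod_type, Fin.sum_univ_two, Fin.sum_univ_four, phi, S₃, W₃,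
        Matrix.kroneckerMap_apply, Matrix.diagonal_apply, Matrix.smul_apply, Matrix.cons_val',
        Matrix.cons_val_zero, Matrix.cons_val_one, Matrix.head_cons, Matrix.empty_val',
        Matrix.cons_val_fin_one, Matrix.head_fin_const, Matrix.of_apply]
      norm_num [Matrix.vecHead, Matrix.vecTail, Fin.val_zero, Fin.val_one,
        show ((2:Fin 4):ℕ)=2 from rfl, show ((3:Fin 4):ℕ)=3 from rfl]
      refine finisher _ ?_
      first
        | (left; push_cast; ring1)
        | (right; left; push_cast; ring1)
        | (right; right; left; push_cast; ring1)
        | (right; right; right; push_cast; ring1)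
end
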